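/- C(S) is deductively closed whenever Ext(S) is nonempty: for every preference default theory form : ι → L.Sentence and every set S of L-sentences with Ext(S) ≠ ∅, every L-sentence φ that is satisfied in every model of C(S) ∪ SPO belongs to C(S). In particular, the set of accepted conclusions lfp(C) is deductively closed (the analogue of AGM postulate (K*1)). -/
import Mathlib


open FirstOrder Language

namespace Brevis

/-- The base language with a single binary relation symbol `R`. -/
def baseLang : Language where
  Functions := fun _ => Empty
  Relations := fun n => match n with
    | 2 => Unit
    | _ => Empty

/-- The binary relation symbol `R` of `baseLang`. -/
def Rsym : baseLang.Relations 2 := Unit.unit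

/-- The base language with a binary relation symbol `R` and one 0-ary relation symbol `P`. -/
def baseLangP : Language where
  Functions := fun _ => Empty
  Relations := fun n => match n with
    | 0 => Unit
    | 2 => Unit
    | _ => Empty

/-- The binary relation symbol `R` of `baseLangP`. -/
def RsymP : baseLangP.Relations 2 := Unit.unit

/-- The 0-ary relation symbol `P` of `baseLangP`. -/
def Psym : baseLangP.Relations 0 := Unit.unit

/-- The atomic sentence `p` given by the propositional symbol `P`. -/
def pSent (ι : Type) : (baseLangP[[ι]]).Sentence :=
  Relations.formula (Sum.inl Psym) ![]

variable (L₀ : FirstOrder.Language.{0, 0}) (R : L₀.Relations 2) (ι : Type) [Fintype ι]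

/-- The atomic sentence `d < d'`, i.e. `R (c_d) (c_d')`. -/
def ltSent (d d' : ι) : (L₀[[ι]]).Sentence :=
  Relations.boundedFormula₂ (Sum.inl R) (L₀.con d).term (L₀.con d').term

/-- The theory `SPO` asserting that `R` is a strict partial order (irreflexive and transitive). -/
def spo : (L₀[[ι]]).Theory :=
  {Relations.irreflexive (Sum.inl R), Relations.transitive (Sum.inl R)}

/-- A set of sentences is consistent iff together with `SPO` it is satisfiable. -/
def Consistent (S : (L₀[[ι]]).Theory) : Prop :=
  Theory.IsSatisfiable (S ∪ spo L₀ R ι)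

open scoped Classical in
/-- The extension base `B(e)` determined by the linear order `e` on the names. -/
noncomputable def base (e : LinearOrder ι) (form : ι → (L₀[[ι]]).Sentence) :
    (L₀[[ι]]).Theory :=
  letI := e
  (Finset.univ.sort (· ≤ · : ι → ι → Prop)).foldl
    (fun B d => if Consistent L₀ R ι (B ∪ {form d}) then B ∪ {form d} else B) ∅

/-- The deductive closure (modulo `SPO`) of a set of sentences:
all sentences satisfied in every model of `S ∪ SPO`. -/
def closure (S : (L₀[[ι]]).Theory) : Set (L₀[[ι]]).Sentence :=
  {φ | (S ∪ spo L₀ R ι) ⊨ᵇ φ}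

/-- The extension `E(e)` generated by the linear order `e`. -/
noncomputable def extension (e : LinearOrder ι) (form : ι → (L₀[[ι]]).Sentence) :
    Set (L₀[[ι]]).Sentence :=
  closure L₀ R ι (base L₀ R ι e form)

/-- A strict partial order `p` on the names is compatible with `S` iff
`S ∪ SPO ∪ {d < d' | p d d'} ∪ {¬ (d < d') | ¬ p d d'}` is satisfiable. -/
def Compatible (p : ι → ι → Prop) (S : (L₀[[ι]]).Theory) : Prop :=
  Theory.IsSatisfiable
    (S ∪ spo L₀ R ι ∪ {φ | ∃ d d', p d d' ∧ φ = ltSent L₀ R ι d d'} ∪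
      {φ | ∃ d d', ¬ p d d' ∧ φ = ∼(ltSent L₀ R ι d d')})

/-- `Exts form S`: the set of extensions `E(e)` where `e` is a linear order extending some
strict partial order compatible with `S`. -/
def Exts (form : ι → (L₀[[ι]]).Sentence) (S : (L₀[[ι]]).Theory) :
    Set (Set (L₀[[ι]]).Sentence) :=
  {E | ∃ (e : LinearOrder ι) (p : ι → ι → Prop), IsStrictOrder ι p ∧
    Compatible L₀ R ι p S ∧ (∀ d d', p d d' → e.lt d d') ∧ E = extension L₀ R ι e form}

/-- The operator `C`. -/
def C (form : ι → (L₀[[ι]]).Sentence) (S : (L₀[[ι]]).Theory) : (L₀[[ι]]).Theory :=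
  ⋂₀ Exts L₀ R ι form S

/-- The least fixed point of `C` (Knaster–Tarski): the set of accepted conclusions. -/
def lfpC (form : ι → (L₀[[ι]]).Sentence) : (L₀[[ι]]).Theory :=
  sInf {S | C L₀ R ι form S ⊆ S}


theorem Exts_antitone {S S' : (L₀[[ι]]).Theory} (h : S' ⊆ S) :
    Exts L₀ R ι form S ⊆ Exts L₀ R ι form S' := by
  rintro E ⟨e, p, hso, hc, hext, rfl⟩
  refine ⟨e, p, hso, ?_, hext, rfl⟩
  exact hc.mono (by
    apply Set.union_subset_union_left
    apply Set.union_subset_union_left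
    exact Set.union_subset_union_left _ h)

theorem C_mono {S S' : (L₀[[ι]]).Theory} (h : S' ⊆ S) :
    C L₀ R ι form S' ⊆ C L₀ R ι form S := by
  intro φ hφ E hE
  exact hφ E (Exts_antitone L₀ R ι h hE)

theorem C_closed (S : (L₀[[ι]]).Theory) (hS : Exts L₀ R ι form S ≠ ∅)
    (φ : (L₀[[ι]]).Sentence) (hφ : (C L₀ R ι form S ∪ spo L₀ R ι) ⊨ᵇ φ) :
    φ ∈ C L₀ R ι form S := by
  intro E hE
  obtain ⟨e, p, hso, hc, hext, rfl⟩ := hE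
  rw [extension, closure, Set.mem_setOf_eq]
  rw [Theory.models_sentence_iff] at hφ ⊢
  intro M
  haveI : (C L₀ R ι form S ∪ spo L₀ R ι).Model M := by
    refine ⟨fun {ψ} hψ => ?_⟩
    rcases hψ with hψ | hψ
    · have hψE : ψ ∈ extension L₀ R ι e form :=
        hψ _ ⟨e, p, hso, hc, hext, rfl⟩
      rw [extension, closure, Set.mem_setOf_eq, Theory.models_sentence_iff] at hψE
      exact hψE M
    · exact M.is_model.realize_of_mem ψ (Set.mem_union_right _ hψ)
  exact hφ (Theory.ModelType.of _ M)

theorem lfpC_fixed : lfpC L₀ R ι form = C L₀ R ι form (lfpC L₀ R ι form) := by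
  have h1 : C L₀ R ι form (lfpC L₀ R ι form) ⊆ lfpC L₀ R ι form := by
    refine le_sInf fun S hS => ?_
    exact le_trans (C_mono L₀ R ι (sInf_le hS)) hS
  exact le_antisymm (sInf_le (C_mono L₀ R ι h1)) h1

/-- `C S` is deductively closed whenever `Exts S` is nonempty; in particular the set of
accepted conclusions is deductively closed (the analogue of AGM postulate (K*1)). -/
theorem C_deductively_closed (ι : Type) [Fintype ι] (form : ι → (baseLang[[ι]]).Sentence) :
    (∀ S : (baseLang[[ι]]).Theory, Exts baseLang Rsym ι form S ≠ ∅ →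
      ∀ φ : (baseLang[[ι]]).Sentence,
        (C baseLang Rsym ι form S ∪ spo baseLang Rsym ι) ⊨ᵇ φ → φ ∈ C baseLang Rsym ι form S) ∧
    (∀ φ : (baseLang[[ι]]).Sentence,
      (lfpC baseLang Rsym ι form ∪ spo baseLang Rsym ι) ⊨ᵇ φ →
        φ ∈ lfpC baseLang Rsym ι form) := by
  constructor
  · exact fun S hS φ hφ => C_closed baseLang Rsym ι S hS φ hφ
  · intro φ hφ
    rw [lfpC_fixed baseLang Rsym ι] at hφ ⊢
    by_cases h : Exts baseLang Rsym ι form (lfpC baseLang Rsym ι form) = ∅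
    · show φ ∈ ⋂₀ Exts baseLang Rsym ι form (lfpC baseLang Rsym ι form)
      rw [h, Set.sInter_empty]
      trivial
    · exact C_closed baseLang Rsym ι _ h φ hφ

end Brevis
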